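/- arXiv:1907.12780 — 4 statements merged into one kernel-verified Lean document; each statement's English description precedes it below -/
import Mathlib

section
/- For any symmetric positive definite p×p matrix Γ and any partition B of {1,…,p} such that Γ ≠ Γ_B, one has det(Γ_B) > det(Γ), where Γ_B is the block-diagonal truncation of Γ with respect to B. -/
open Matrix Finset
open scoped MatrixOrder

-- block pattern is multiplicative-closed; inverse of pattern matrix keeps pattern
lemma aux_inv_pattern {p : ℕ} {K : Type*} [DecidableEq K] (c : Fin p → K)
    (S : Matrix (Fin p) (Fin p) ℝ) (hU : IsUnit S.det)
    (hpat : ∀ i j, c i ≠ c j → S i j = 0) :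
    ∀ i j, c i ≠ c j → S⁻¹ i j = 0 := by
  set T : Matrix (Fin p) (Fin p) ℝ :=
    Matrix.of (fun i j => if c i = c j then S⁻¹ i j else 0) with hT
  have hST : S * T = 1 := by
    have h1 : S * S⁻¹ = 1 := Matrix.mul_nonsing_inv _ hU
    ext i j
    by_cases h : c i = c j
    · have : (S * T) i j = (S * S⁻¹) i j := by
        simp only [Matrix.mul_apply, hT, Matrix.of_apply]
        refine Finset.sum_congr rfl fun k _ => ?_
        by_cases hk : c k = c j
        · simp [hk]
        · simp [if_neg hk, hpat i k (fun e => hk (e ▸ h))]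
      rw [this, h1]
    · have hij : i ≠ j := fun e => h (e ▸ rfl)
      rw [Matrix.mul_apply, Matrix.one_apply_ne hij]
      refine Finset.sum_eq_zero fun k _ => ?_
      simp only [hT, Matrix.of_apply]
      by_cases hk : c k = c j
      · rw [hpat i k (fun e => h (e.trans hk)), zero_mul]
      · rw [if_neg hk, mul_zero]
  have : S⁻¹ = T := Matrix.inv_eq_right_inv hST
  intro i j hij
  rw [this]
  simp [hT, hij]

-- the block truncation of a PosDef matrix is PosDef
lemma aux_posdef {p : ℕ} {K : Type*} [DecidableEq K] (c : Fin p → K)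
    (Γ : Matrix (Fin p) (Fin p) ℝ) (hΓ : Γ.PosDef) :
    (Matrix.of fun i j => if c i = c j then Γ i j else 0 :
      Matrix (Fin p) (Fin p) ℝ).PosDef := by
  set S : Matrix (Fin p) (Fin p) ℝ :=
    Matrix.of (fun i j => if c i = c j then Γ i j else 0) with hS
  have herm : S.IsHermitian := by
    ext i j
    simp only [conjTranspose_apply, hS, Matrix.of_apply, star_trivial]
    by_cases h : c i = c j
    · rw [if_pos h, if_pos h.symm]
      exact congrFun (congrFun hΓ.isHermitian j) i ▸ (by
        simpa using congrFun (congrFun hΓ.isHermitian.symm j) i)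
    · rw [if_neg h, if_neg (fun e => h e.symm)]
  refine posDef_iff_dotProduct_mulVec.mpr ⟨herm, fun x hx => ?_⟩
  set xk : K → (Fin p → ℝ) := fun k i => if c i = k then x i else 0 with hxk
  have key : star x ⬝ᵥ S *ᵥ x =
      ∑ k ∈ Finset.univ.image c, star (xk k) ⬝ᵥ Γ *ᵥ (xk k) := by
    simp only [dotProduct, mulVec, star_trivial, hxk, hS, Matrix.of_apply,
      Pi.star_apply]
    rw [Finset.sum_comm]
    refine Finset.sum_congr rfl fun i _ => ?_
    simp only [Finset.mul_sum]
    rw [Finset.sum_comm]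
    refine Finset.sum_congr rfl fun j _ => ?_
    simp only [mul_ite, ite_mul, zero_mul, mul_zero]
    rw [Finset.sum_ite_eq (Finset.univ.image c) (c j)
        (fun k => if c i = k then x i * (Γ i j * x j) else 0)]
    rw [if_pos (Finset.mem_image_of_mem c (Finset.mem_univ j))]
  rw [key]
  obtain ⟨i0, hi0⟩ := Function.ne_iff.mp hx
  refine Finset.sum_pos' (fun k _ => hΓ.posSemidef.dotProduct_mulVec_nonneg _) ⟨c i0,
    Finset.mem_image_of_mem c (Finset.mem_univ i0), hΓ.dotProduct_mulVec_pos ?_⟩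
  exact fun e => hi0 (by simpa [hxk] using congrFun e i0)

lemma aux_trace_eig {n : ℕ} {A : Matrix (Fin n) (Fin n) ℝ} (hA : A.IsHermitian) :
    A.trace = ∑ i, hA.eigenvalues i := by
  conv_lhs => rw [hA.spectral_theorem, Unitary.conjStarAlgAut_apply]
  rw [Matrix.trace_mul_cycle,
    (Matrix.mem_unitaryGroup_iff').mp (hA.eigenvectorUnitary).2, Matrix.one_mul]
  simp [Matrix.trace_diagonal]

open Matrix in
/-- For any symmetric positive definite `Γ` and any partition (fibers of `c`) with
block-diagonal truncation `Γ_B ≠ Γ`, one has `det Γ_B > det Γ`. -/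
theorem stmt_5 {p : ℕ} {K : Type*} [DecidableEq K]
    (Γ : Matrix (Fin p) (Fin p) ℝ) (hΓ : Γ.PosDef) (c : Fin p → K)
    (ΓB : Matrix (Fin p) (Fin p) ℝ)
    (hΓB : ΓB = Matrix.of fun i j => if c i = c j then Γ i j else 0)
    (hne : Γ ≠ ΓB) :
    Γ.det < ΓB.det := by
  have hS : ΓB.PosDef := hΓB ▸ aux_posdef c Γ hΓ
  have hpat : ∀ i j, c i ≠ c j → ΓB i j = 0 := by
    intro i j h; rw [hΓB]; simp [h]
  have hsame : ∀ i j, c i = c j → ΓB i j = Γ i j := by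
    intro i j h; rw [hΓB]; simp [h]
  have hdetS : 0 < ΓB.det := hS.det_pos
  have hUdet : IsUnit ΓB.det := hdetS.ne'.isUnit
  have hinvpat : ∀ i j, c i ≠ c j → ΓB⁻¹ i j = 0 :=
    aux_inv_pattern c ΓB hUdet hpat
  -- trace of ΓB⁻¹ * Γ equals p
  have htr : (ΓB⁻¹ * Γ).trace = (p : ℝ) := by
    have h1 : (ΓB⁻¹ * Γ).trace = (ΓB⁻¹ * ΓB).trace := by
      simp only [Matrix.trace, Matrix.diag, Matrix.mul_apply]
      refine Finset.sum_congr rfl fun i _ => Finset.sum_congr rfl fun j _ => ?_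
      by_cases h : c i = c j
      · rw [hsame j i h.symm]
      · rw [hinvpat i j h, zero_mul, zero_mul]
    rw [h1, Matrix.nonsing_inv_mul _ hUdet, Matrix.trace_one]
    simp
  -- the square root of ΓB
  set R := CFC.sqrt ΓB with hR
  have hRps : R.PosSemidef := (CFC.sqrt_nonneg ΓB).posSemidef
  have hRR : R * R = ΓB := CFC.sqrt_mul_sqrt_self ΓB hS.posSemidef.nonneg
  have hdetR : R.det * R.det = ΓB.det := by rw [← Matrix.det_mul, hRR]
  have hdetRnn : 0 ≤ R.det := by
    rw [hRps.isHermitian.det_eq_prod_eigenvalues]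
    simp only [RCLike.ofReal_real_eq_id, id_eq]
    exact Finset.prod_nonneg fun i _ => hRps.eigenvalues_nonneg i
  have hdetRpos : 0 < R.det := by
    rcases hdetRnn.lt_or_eq with h | h
    · exact h
    · exfalso; rw [← hdetR, ← h, mul_zero] at hdetS; exact lt_irrefl 0 hdetS
  have hRU : IsUnit R.det := hdetRpos.ne'.isUnit
  have hRinv : R⁻¹ * R = 1 := Matrix.nonsing_inv_mul _ hRU
  have hRinv' : R * R⁻¹ = 1 := Matrix.mul_nonsing_inv _ hRU
  have hRih : R⁻¹.IsHermitian := hRps.isHermitian.inv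
  set N := R⁻¹ * Γ * R⁻¹ with hN
  have hNpd : N.PosDef := by
    refine posDef_iff_dotProduct_mulVec.mpr ⟨?_, fun x hx => ?_⟩
    · rw [hN, Matrix.IsHermitian]
      rw [Matrix.conjTranspose_mul, Matrix.conjTranspose_mul, hRih,
        hΓ.isHermitian, Matrix.mul_assoc]
    · have hy : R⁻¹ *ᵥ x ≠ 0 := by
        intro h
        apply hx
        have := congrArg (R *ᵥ ·) h
        simpa [Matrix.mulVec_mulVec, hRinv'] using this
      have hst : star (R⁻¹ *ᵥ x) = star x ᵥ* R⁻¹ := by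
        rw [Matrix.star_mulVec, hRih]
      have : star x ⬝ᵥ N *ᵥ x = star (R⁻¹ *ᵥ x) ⬝ᵥ Γ *ᵥ (R⁻¹ *ᵥ x) := by
        rw [hN, ← Matrix.mulVec_mulVec, ← Matrix.mulVec_mulVec,
          Matrix.dotProduct_mulVec (star x), hst]
      rw [this]
      exact hΓ.dotProduct_mulVec_pos hy
  -- determinant relation
  have hdetN : N.det * ΓB.det = Γ.det := by
    rw [hN, Matrix.det_mul, Matrix.det_mul, Matrix.det_nonsing_inv, Ring.inverse_eq_inv', ← hdetR]
    field_simp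
  -- trace of N is p
  have htrN : N.trace = (p : ℝ) := by
    rw [hN, Matrix.trace_mul_cycle, ← Matrix.mul_inv_rev, hRR, htr]
  -- eigenvalues of N
  set μ := hNpd.isHermitian.eigenvalues with hμ
  have hμpos : ∀ i, 0 < μ i := hNpd.eigenvalues_pos
  have hμsum : ∑ i, μ i = (p : ℝ) := by rw [← aux_trace_eig, htrN]
  have hμprod : N.det = ∏ i, μ i := by
    rw [hNpd.isHermitian.det_eq_prod_eigenvalues]; simp; rfl
  -- N ≠ 1, hence some eigenvalue ≠ 1
  have hNne : N ≠ 1 := by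
    intro h
    apply hne
    have : Γ = R * N * R := by
      rw [hN, Matrix.mul_assoc, Matrix.mul_assoc, hRinv, Matrix.mul_one,
        ← Matrix.mul_assoc, hRinv', Matrix.one_mul]
    rw [this, h, Matrix.mul_one, hRR]
  have hμne : ∃ i, μ i ≠ 1 := by
    by_contra h
    push_neg at h
    apply hNne
    have hd : Matrix.diagonal (RCLike.ofReal ∘ hNpd.isHermitian.eigenvalues)
        = (1 : Matrix (Fin p) (Fin p) ℝ) := by
      ext i j
      rcases eq_or_ne i j with rfl | hij
      · have hi := h i
        rw [hμ] at hi
        simp [hi]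
      · simp [hij]
    rw [hNpd.isHermitian.spectral_theorem, Unitary.conjStarAlgAut_apply, hd, Matrix.mul_one,
      (Matrix.mem_unitaryGroup_iff).mp (hNpd.isHermitian.eigenvectorUnitary).2]
  -- strict AM-GM via x < exp (x - 1)
  have hlt : ∏ i, μ i < 1 := by
    obtain ⟨i0, hi0⟩ := hμne
    have key : ∏ i, μ i < ∏ i, Real.exp (μ i - 1) := by
      refine Finset.prod_lt_prod (fun i _ => hμpos i)
        (fun i _ => by linarith [Real.add_one_le_exp (μ i - 1)])
        ⟨i0, Finset.mem_univ i0, ?_⟩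
      have := Real.add_one_lt_exp (x := μ i0 - 1) (by intro h; apply hi0; linarith)
      linarith
    calc ∏ i, μ i < ∏ i, Real.exp (μ i - 1) := key
      _ = Real.exp (∑ i, (μ i - 1)) := (Real.exp_sum _ _).symm
      _ = 1 := by
          rw [Finset.sum_sub_distrib, hμsum]
          simp
  nlinarith [hμprod, hdetN, hdetS, hlt]
end

section
/- Let Γ be a symmetric positive definite p×p matrix partitioned into blocks indexed by I and J = {1,…,p}∖I with Γ_{J,I} ≠ 0. Then det(Γ_{I,I}) · det(Γ_{J,J}) > det(Γ). (Fischer-type strict inequality.) -/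
open Matrix in
private lemma aux_posDef_submatrix_equiv {m n : Type*} [Fintype m] [Fintype n]
    {M : Matrix n n ℝ} (hM : M.PosDef) (e : m ≃ n) : (M.submatrix e e).PosDef := by
  refine .of_dotProduct_mulVec_pos (hM.1.submatrix e) fun x hx => ?_
  have hx' : x ∘ e.symm ≠ 0 := fun h => hx (by ext i; simpa using congrFun h (e i))
  have h := hM.dotProduct_mulVec_pos hx'
  convert h using 1
  rw [submatrix_mulVec_equiv]
  simp only [dotProduct, Function.comp_apply, Pi.star_apply]
  exact (Fintype.sum_equiv e.symm _ _ (fun i => by simp)).symm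

open Matrix in
private lemma aux_posDef_toBlocks₁₁ {m n : Type*} [Fintype m] [Fintype n]
    {A : Matrix m m ℝ} {B : Matrix m n ℝ} {C : Matrix n m ℝ} {D : Matrix n n ℝ}
    (h : (fromBlocks A B C D).PosDef) : A.PosDef := by
  refine .of_dotProduct_mulVec_pos (isHermitian_fromBlocks_iff.mp h.1).1 fun x hx => ?_
  have hx0 : (Sum.elim x (0 : n → ℝ)) ≠ 0 := by
    intro hc; exact hx (by ext i; exact congrFun hc (Sum.inl i))
  have h2 := h.dotProduct_mulVec_pos hx0
  simpa [Function.star_sumElim, fromBlocks_mulVec, sumElim_dotProduct_sumElim] using h2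

open Matrix MatrixOrder in
private lemma aux_posDef_of_psd_det {n : Type*} [Fintype n] [DecidableEq n]
    {S : Matrix n n ℝ} (hS : S.PosSemidef) (hdet : IsUnit S.det) : S.PosDef := by
  refine .of_dotProduct_mulVec_pos hS.1 fun x hx => ?_
  set R := CFC.sqrt S with hR
  have hRpsd : R.PosSemidef := (CFC.sqrt_nonneg S).posSemidef
  have hRR : R * R = S := CFC.sqrt_mul_sqrt_self S hS.nonneg
  have hRH : Rᴴ = R := hRpsd.1
  have key : star x ⬝ᵥ S *ᵥ x = star (R *ᵥ x) ⬝ᵥ (R *ᵥ x) := by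
    rw [← hRR, ← mulVec_mulVec, dotProduct_mulVec, star_mulVec, hRH]
  rcases lt_or_eq_of_le (hS.dotProduct_mulVec_nonneg x) with hlt | heq
  · exact hlt
  · exfalso
    have hRx : R *ᵥ x = 0 := by
      have h0 : (R *ᵥ x) ⬝ᵥ (R *ᵥ x) = 0 := by
        have := key.symm.trans heq.symm
        simpa using this
      exact (dotProduct_self_eq_zero).mp h0
    have hSx : S *ᵥ x = 0 := by rw [← hRR, ← mulVec_mulVec, hRx, mulVec_zero]
    have : x = 0 := by
      have := congrArg (S⁻¹ *ᵥ ·) hSx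
      simpa [mulVec_mulVec, nonsing_inv_mul S hdet] using this
    exact hx this

open Matrix in
private lemma aux_one_lt_det_one_add {n : Type*} [Fintype n] [DecidableEq n]
    {N : Matrix n n ℝ} (hN : N.PosSemidef) (h0 : N ≠ 0) : 1 < (1 + N).det := by
  have hH := hN.1
  have hspec := hH.spectral_theorem
  set U : Matrix n n ℝ := (hH.eigenvectorUnitary : Matrix n n ℝ) with hU
  set μ := hH.eigenvalues with hμ
  have hUU : U * star U = 1 := (Matrix.mem_unitaryGroup_iff).mp hH.eigenvectorUnitary.2
  have hUU' : star U * U = 1 := (Matrix.mem_unitaryGroup_iff').mp hH.eigenvectorUnitary.2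
  have hdiag : diagonal (RCLike.ofReal ∘ μ) = diagonal μ := by
    congr 1
  rw [hdiag, Unitary.conjStarAlgAut_apply, ← hU] at hspec
  have key : 1 + N = U * (1 + diagonal μ) * star U := by
    rw [Matrix.mul_add, Matrix.add_mul, Matrix.mul_one, hUU, ← hspec]
  have hdet : (1 + N).det = ∏ i, (1 + μ i) := by
    rw [key, det_mul, det_mul, mul_comm, ← mul_assoc, ← det_mul, hUU', det_one, one_mul]
    have : (1 : Matrix n n ℝ) + diagonal μ = diagonal (fun i => 1 + μ i) := by
      rw [← diagonal_one, diagonal_add]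
    rw [this, det_diagonal]
  rw [hdet]
  have hnonneg : ∀ i, 0 ≤ μ i := hN.eigenvalues_nonneg
  have hex : ∃ i, 0 < μ i := by
    by_contra hc
    push_neg at hc
    have hz : μ = 0 := funext fun i => le_antisymm (hc i) (hnonneg i)
    apply h0
    rw [hspec, hz, show (diagonal (0 : n → ℝ)) = 0 from diagonal_zero,
      Matrix.mul_zero, Matrix.zero_mul]
  obtain ⟨i, hi⟩ := hex
  calc (1 : ℝ) = ∏ _j : n, (1 : ℝ) := by simp
    _ < ∏ j, (1 + μ j) := by
        refine Finset.prod_lt_prod (fun j _ => one_pos) (fun j _ => by linarith [hnonneg j]) ?_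
        exact ⟨i, Finset.mem_univ i, by linarith⟩

open Matrix MatrixOrder in
private lemma aux_det_lt_det_add {n : Type*} [Fintype n] [DecidableEq n]
    {S M : Matrix n n ℝ} (hS : S.PosDef) (hM : M.PosSemidef) (hM0 : M ≠ 0) :
    S.det < (S + M).det := by
  set R := CFC.sqrt S with hR
  have hRpsd : R.PosSemidef := (CFC.sqrt_nonneg S).posSemidef
  have hRR : R * R = S := CFC.sqrt_mul_sqrt_self S hS.posSemidef.nonneg
  have hdetR : R.det * R.det = S.det := by rw [← det_mul, hRR]
  have hdetRu : IsUnit R.det := by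
    have h := hS.det_pos
    rw [← hdetR] at h
    have hz : R.det ≠ 0 := by intro hz; rw [hz, mul_zero] at h; exact lt_irrefl _ h
    exact hz.isUnit
  set N := R⁻¹ * M * R⁻¹ with hN
  have hRinvH : (R⁻¹)ᴴ = R⁻¹ := hRpsd.1.inv
  have hNpsd : N.PosSemidef := by
    have h := hM.conjTranspose_mul_mul_same (B := R⁻¹)
    rwa [hRinvH] at h
  have hMN : M = R * N * R := by
    rw [hN]
    calc M = (R * R⁻¹) * M * (R⁻¹ * R) := by
          rw [mul_nonsing_inv R hdetRu, nonsing_inv_mul R hdetRu, Matrix.one_mul, Matrix.mul_one]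
      _ = R * (R⁻¹ * M * R⁻¹) * R := by noncomm_ring
  have hN0 : N ≠ 0 := fun h => hM0 (by rw [hMN, h, Matrix.mul_zero, Matrix.zero_mul])
  have hsum : S + M = R * (1 + N) * R := by
    rw [Matrix.mul_add, Matrix.add_mul, Matrix.mul_one, hRR, ← hMN]
  have h1 : 1 < (1 + N).det := aux_one_lt_det_one_add hNpsd hN0
  have hdetSpos := hS.det_pos
  calc S.det = S.det * 1 := (mul_one _).symm
    _ < S.det * (1 + N).det := by exact (mul_lt_mul_iff_right₀ hdetSpos).mpr h1
    _ = (S + M).det := by rw [hsum, det_mul, det_mul, ← hdetR]; ring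

open Matrix in
/-- Fischer-type strict inequality: for `Γ` symmetric positive definite and a nonempty
proper index subset `I` with `Γ_{J,I} ≠ 0` (where `J = Iᶜ`),
`det Γ < det Γ_{I,I} · det Γ_{J,J}`. -/
theorem stmt_6 {p : ℕ} (Γ : Matrix (Fin p) (Fin p) ℝ) (hΓ : Γ.PosDef)
    (I : Finset (Fin p)) (hne : I.Nonempty) (hproper : I ≠ Finset.univ)
    (hJI : Γ.submatrix (fun j : {x : Fin p // x ∉ I} => (j : Fin p))
        (fun i : {x : Fin p // x ∈ I} => (i : Fin p)) ≠ 0) :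
    Γ.det <
      (Γ.submatrix (fun i : {x : Fin p // x ∈ I} => (i : Fin p))
          (fun i : {x : Fin p // x ∈ I} => (i : Fin p))).det *
      (Γ.submatrix (fun j : {x : Fin p // x ∉ I} => (j : Fin p))
          (fun j : {x : Fin p // x ∉ I} => (j : Fin p))).det := by
  classical
  set e := Equiv.sumCompl (fun x : Fin p => x ∈ I) with he
  set Γ' := Γ.submatrix e e with hΓ'def
  have hΓ' : Γ'.PosDef := aux_posDef_submatrix_equiv hΓ e
  set A := Γ'.toBlocks₁₁ with hAdef
  set B := Γ'.toBlocks₁₂ with hBdef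
  set C := Γ'.toBlocks₂₁ with hCdef
  set D := Γ'.toBlocks₂₂ with hDdef
  have hblocks : Γ' = fromBlocks A B C D := (fromBlocks_toBlocks Γ').symm
  have hherm := hΓ'.1
  rw [hblocks] at hherm
  have hBC : Bᴴ = C := (isHermitian_fromBlocks_iff.mp hherm).2.1
  have hA : A.PosDef := aux_posDef_toBlocks₁₁ (hblocks ▸ hΓ')
  haveI : Invertible A := A.invertibleOfIsUnitDet hA.det_pos.ne'.isUnit
  have hdetΓ' : Γ'.det = Γ.det := det_submatrix_equiv_self e Γ
  have hSchur : Γ.det = A.det * (D - Bᴴ * A⁻¹ * B).det := by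
    rw [← hdetΓ', hblocks, det_fromBlocks₁₁, invOf_eq_nonsing_inv, hBC]
  set S := D - Bᴴ * A⁻¹ * B with hSdef
  set M := Bᴴ * A⁻¹ * B with hMdef
  have hDSM : D = S + M := by rw [hSdef]; exact (sub_add_cancel _ _).symm
  have hSpsd : S.PosSemidef := by
    have h := hΓ'.posSemidef
    rw [hblocks, ← hBC] at h
    exact (PosDef.fromBlocks₁₁ B D hA).mp h
  have hdetSpos : 0 < S.det := by
    have h := hΓ.det_pos
    rw [hSchur] at h
    nlinarith [hA.det_pos]
  have hS : S.PosDef := aux_posDef_of_psd_det hSpsd hdetSpos.ne'.isUnit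
  have hMpsd : M.PosSemidef := by
    have h := hA.inv.posSemidef.conjTranspose_mul_mul_same (B := B)
    exact h
  have hC0 : C ≠ 0 := hJI
  have hB0 : B ≠ 0 := by
    intro h
    apply hC0
    rw [← hBC, h, conjTranspose_zero]
  have hM0 : M ≠ 0 := by
    intro h
    apply hB0
    have hBv : ∀ x, B *ᵥ x = 0 := by
      intro x
      by_contra hBx
      have hpos := hA.inv.dotProduct_mulVec_pos hBx
      have hzero : star (B *ᵥ x) ⬝ᵥ A⁻¹ *ᵥ (B *ᵥ x) = 0 := by
        have : star x ⬝ᵥ M *ᵥ x = 0 := by rw [h]; simp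
        rw [hMdef] at this
        rw [← this, ← mulVec_mulVec, ← mulVec_mulVec, dotProduct_mulVec (star x),
          ← star_mulVec]
      rw [hzero] at hpos
      exact lt_irrefl _ hpos
    ext i j
    have := congrFun (hBv (Pi.single j 1)) i
    simpa [mulVec, dotProduct, Pi.single_apply, mul_ite] using this
  have hlt : S.det < D.det := by
    rw [hDSM]
    exact aux_det_lt_det_add hS hMpsd hM0
  have final : Γ.det < A.det * D.det := by
    rw [hSchur]
    exact (mul_lt_mul_iff_right₀ hA.det_pos).mpr hlt
  exact final
end

section
/- Let Σ and Σ_B be symmetric positive definite p×p matrices where Σ_B is the block-diagonal truncation of Σ with respect to a partition B (so the diagonal blocks agree). Then Tr(Σ_B^{-1} Σ Σ_B^{-1} Σ) ≤ Tr(Σ_B^{-1} Σ)² = p². -/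
open Matrix
open scoped MatrixOrder

lemma psd_entry_sq_le {n : ℕ} {N : Matrix (Fin n) (Fin n) ℝ} (hN : N.PosSemidef)
    (i j : Fin n) : (N i j) ^ 2 ≤ N i i * N j j := by
  rcases eq_or_ne i j with rfl | hij
  · nlinarith [hN.dotProduct_mulVec_nonneg (Pi.single i 1)]
  have key : ∀ t : ℝ, 0 ≤ N i i * (t * t) + (2 * N i j) * t + N j j := by
    intro t
    have h := hN.dotProduct_mulVec_nonneg (t • (Pi.single i 1 : Fin n → ℝ) + (Pi.single j 1 : Fin n → ℝ))
    have hs : N j i = N i j := by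
      have := congrFun (congrFun hN.1 i) j
      simpa [conjTranspose_apply] using this
    simp only [dotProduct_add, add_dotProduct, mulVec_add, mulVec_smul, smul_dotProduct,
      dotProduct_smul, star_add, star_smul, mulVec_single, smul_eq_mul, star_trivial] at h
    simp only [single_dotProduct, dotProduct_single, mul_one, one_mul,
      Pi.smul_apply, Pi.add_apply, Pi.single_apply, smul_eq_mul, col_apply, MulOpposite.op_one,
      one_smul] at h
    rw [hs] at h
    nlinarith [h]
  have := discrim_le_zero key
  rw [discrim] at this
  nlinarith [this]

lemma psd_trace_sq {n : ℕ} {N : Matrix (Fin n) (Fin n) ℝ} (hN : N.PosSemidef) :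
    (N * N).trace ≤ N.trace ^ 2 := by
  have hs : ∀ i j, N j i = N i j := fun i j => by
    have := congrFun (congrFun hN.1 i) j
    simpa [conjTranspose_apply] using this
  have h1 : (N * N).trace = ∑ i, ∑ j, (N i j) ^ 2 := by
    simp [Matrix.trace, Matrix.diag, Matrix.mul_apply, sq]
    congr 1; ext i; congr 1; ext j; rw [hs]
  have h2 : N.trace ^ 2 = ∑ i, ∑ j, N i i * N j j := by
    simp [Matrix.trace, sq, Finset.sum_mul_sum]
  rw [h1, h2]
  exact Finset.sum_le_sum fun i _ => Finset.sum_le_sum fun j _ => psd_entry_sq_le hN i j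

open Matrix in
/-- For `Σ` symmetric positive definite with block-diagonal truncation `Σ_B` (with
respect to a partition given by the fibers of `c`):
`Tr(Σ_B⁻¹ Σ Σ_B⁻¹ Σ) ≤ Tr(Σ_B⁻¹ Σ)² = p²`. -/
theorem stmt_10 {p : ℕ} {K : Type*} [DecidableEq K]
    (S : Matrix (Fin p) (Fin p) ℝ) (hS : S.PosDef) (c : Fin p → K)
    (SB : Matrix (Fin p) (Fin p) ℝ)
    (hSB : SB = Matrix.of fun i j => if c i = c j then S i j else 0) :
    (SB⁻¹ * S * SB⁻¹ * S).trace ≤ (SB⁻¹ * S).trace ^ 2 ∧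
    (SB⁻¹ * S).trace ^ 2 = (p : ℝ) ^ 2 := by
  have hE : ∀ i j, SB i j = if c i = c j then S i j else 0 := fun i j => by rw [hSB]; rfl
  have hsS : ∀ i j, S j i = S i j := fun i j => by
    have := congrFun (congrFun hS.1 i) j
    simpa [conjTranspose_apply] using this
  -- SB is positive definite
  have hSBpd : SB.PosDef := by
    refine Matrix.PosDef.of_dotProduct_mulVec_pos ?_ ?_
    · ext i j
      rw [conjTranspose_apply, hE, hE, star_trivial]
      by_cases h : c i = c j
      · rw [if_pos h, if_pos h.symm, hsS]
      · rw [if_neg h, if_neg (fun hh => h hh.symm)]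
    · intro x hx
      rw [show star x = x from star_trivial x] at *
      set y : K → Fin p → ℝ := fun k i => if c i = k then x i else 0 with hy
      have expand : x ⬝ᵥ SB *ᵥ x =
          ∑ k ∈ Finset.image c Finset.univ, (y k) ⬝ᵥ S *ᵥ (y k) := by
        calc x ⬝ᵥ SB *ᵥ x = ∑ i, ∑ j, x i * (SB i j * x j) := by
              simp [dotProduct, mulVec, Finset.mul_sum]
          _ = ∑ i, ∑ j, ∑ k ∈ Finset.image c Finset.univ, y k i * (S i j * y k j) := by
              refine Finset.sum_congr rfl fun i _ => Finset.sum_congr rfl fun j _ => ?_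
              rw [Finset.sum_eq_single (c i)]
              · rw [hE, hy]
                by_cases h : c i = c j
                · simp [h]
                · simp [h]
                  exact fun hh => absurd hh.symm h
              · intro b _ hb
                simp only [hy]
                rw [if_neg (fun hh : c i = b => hb hh.symm), zero_mul]
              · intro h
                exact absurd (Finset.mem_image_of_mem c (Finset.mem_univ i)) h
          _ = ∑ k ∈ Finset.image c Finset.univ, ∑ i, ∑ j, y k i * (S i j * y k j) := by
              exact (Finset.sum_congr rfl fun i _ => Finset.sum_comm).trans Finset.sum_comm
          _ = ∑ k ∈ Finset.image c Finset.univ, (y k) ⬝ᵥ S *ᵥ (y k) := by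
              refine Finset.sum_congr rfl fun k _ => ?_
              simp [dotProduct, mulVec, Finset.mul_sum]
      rw [expand]
      obtain ⟨i0, hi0⟩ := Function.ne_iff.mp hx
      refine Finset.sum_pos' (fun k _ => hS.posSemidef.dotProduct_mulVec_nonneg _) ⟨c i0, Finset.mem_image_of_mem c (Finset.mem_univ i0), ?_⟩
      refine hS.dotProduct_mulVec_pos (Function.ne_iff.mpr ⟨i0, ?_⟩)
      show (if c i0 = c i0 then x i0 else 0) ≠ 0
      rw [if_pos rfl]
      exact hi0
  have hdet : IsUnit SB.det := hSBpd.det_pos.ne'.isUnit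
  have h1 : SB * SB⁻¹ = 1 := Matrix.mul_nonsing_inv _ hdet
  have h2 : SB⁻¹ * SB = 1 := Matrix.nonsing_inv_mul _ hdet
  -- block structure of SB⁻¹
  have hTblock : ∀ i j, c i ≠ c j → SB⁻¹ i j = 0 := by
    intro i j hij
    set P : Matrix (Fin p) (Fin p) ℝ := Matrix.diagonal (fun i => if c i = c j then 1 else 0) with hP
    have hcomm : SB * P = P * SB := by
      ext a b
      rw [hP, Matrix.mul_diagonal, Matrix.diagonal_mul, hE]
      by_cases h : c a = c b
      · rw [h]; ring
      · simp [h]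
    have hx : P * SB⁻¹ = SB⁻¹ * P := by
      calc P * SB⁻¹ = SB⁻¹ * SB * P * SB⁻¹ := by rw [h2, one_mul]
        _ = SB⁻¹ * (SB * P) * SB⁻¹ := by rw [mul_assoc SB⁻¹ SB P]
        _ = SB⁻¹ * (P * SB) * SB⁻¹ := by rw [hcomm]
        _ = SB⁻¹ * P * (SB * SB⁻¹) := by simp only [mul_assoc]
        _ = SB⁻¹ * P := by rw [h1, mul_one]
    have := congrArg (fun M : Matrix (Fin p) (Fin p) ℝ => M i j) hx
    simpa [hP, Matrix.mul_diagonal, Matrix.diagonal_mul, hij] using this.symm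
  -- trace of SB⁻¹ * S is p
  have htr : (SB⁻¹ * S).trace = (p : ℝ) := by
    have : (SB⁻¹ * S).trace = (SB⁻¹ * SB).trace := by
      simp only [Matrix.trace, Matrix.diag, Matrix.mul_apply]
      refine Finset.sum_congr rfl fun i _ => Finset.sum_congr rfl fun j _ => ?_
      by_cases h : c i = c j
      · rw [hE, if_pos h.symm]
      · rw [hTblock i j h, zero_mul, zero_mul]
    rw [this, h2, Matrix.trace_one]
    simp
  -- conjugation by the square root of SB⁻¹
  have hTpsd : (SB⁻¹).PosSemidef := hSBpd.inv.posSemidef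
  set R := CFC.sqrt (SB⁻¹) with hRdef
  have hR2 : R * R = SB⁻¹ := CFC.sqrt_mul_sqrt_self _ hTpsd.nonneg
  have hRH : Rᴴ = R := (CFC.sqrt_nonneg _).posSemidef.1
  have hNpsd : (R * S * R).PosSemidef := by
    have := hS.posSemidef.conjTranspose_mul_mul_same R
    rwa [hRH] at this
  have traceN : (R * S * R).trace = (SB⁻¹ * S).trace := by
    rw [Matrix.trace_mul_cycle R S R, hR2]
  have traceNN : ((R * S * R) * (R * S * R)).trace = (SB⁻¹ * S * SB⁻¹ * S).trace := by
    have e : (R * S * R) * (R * S * R) = R * (S * SB⁻¹ * S) * R := by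
      rw [← hR2]; simp only [mul_assoc]
    rw [e, Matrix.trace_mul_cycle R (S * SB⁻¹ * S) R, hR2]
    congr 1
    simp only [mul_assoc]
  constructor
  · calc (SB⁻¹ * S * SB⁻¹ * S).trace = ((R * S * R) * (R * S * R)).trace := traceNN.symm
      _ ≤ ((R * S * R).trace) ^ 2 := psd_trace_sq hNpsd
      _ = (SB⁻¹ * S).trace ^ 2 := by rw [traceN]
  · rw [htr]
end

section
/- Let Σ be a p×p symmetric positive definite matrix with block-diagonal structure B* and let Σ^{-1} = (γ_{ij}). Define the matrix B indexed by pairs (m,n), m ≤ n, (m,n) within a common block of B*, by B_{mn,m'n'} = 2(σ_{mm'}σ_{nn'} + σ_{mn'}σ_{nm'}) if m<n, m'<n'; = 2√2 σ_{mm'}σ_{nn'} if exactly one of m=n, m'=n' holds; = 2σ_{mm'}² if m=n and m'=n'. Define A analogously with γ in place of σ and factor 1/2 in place of 2 (and 1/√2 in place of 2√2). Then B = A^{-1}. -/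
open Finset in
lemma sum_pairs_aux {p : ℕ} {K : Type*} [DecidableEq K] (c : Fin p → K)
    (F : Fin p × Fin p → ℝ)
    (hsymm : ∀ i j, F (i, j) = F (j, i))
    (hzero : ∀ i j, c i ≠ c j → F (i, j) = 0) :
    ∑ q : {q : Fin p × Fin p // q.1 ≤ q.2 ∧ c q.1 = c q.2},
      (if q.1.1 < q.1.2 then (2:ℝ) else 1) * F q.1 = ∑ x : Fin p × Fin p, F x := by
  classical
  have hsub : (∑ q : {q : Fin p × Fin p // q.1 ≤ q.2 ∧ c q.1 = c q.2},
      (if q.1.1 < q.1.2 then (2:ℝ) else 1) * F q.1)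
      = ∑ x ∈ univ.filter (fun x : Fin p × Fin p => x.1 ≤ x.2 ∧ c x.1 = c x.2),
        (if x.1 < x.2 then (2:ℝ) else 1) * F x := by
    exact (Finset.sum_subtype (univ.filter (fun x : Fin p × Fin p => x.1 ≤ x.2 ∧ c x.1 = c x.2))
      (by simp) (fun x => (if x.1 < x.2 then (2:ℝ) else 1) * F x)).symm
  rw [hsub]
  have hsplit : ∀ x ∈ univ.filter (fun x : Fin p × Fin p => x.1 ≤ x.2 ∧ c x.1 = c x.2),
      (if x.1 < x.2 then (2:ℝ) else 1) * F x = F x + (if x.1 < x.2 then F x else 0) := by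
    intro x _; split <;> ring
  rw [Finset.sum_congr rfl hsplit, Finset.sum_add_distrib]
  have h1 : ∑ x ∈ univ.filter (fun x : Fin p × Fin p => x.1 ≤ x.2 ∧ c x.1 = c x.2), F x
      = ∑ x ∈ univ.filter (fun x : Fin p × Fin p => x.1 ≤ x.2), F x := by
    apply Finset.sum_subset
    · intro x hx; simp only [mem_filter, mem_univ, true_and] at hx ⊢; exact hx.1
    · intro x hx hnx
      simp only [mem_filter, mem_univ, true_and, not_and] at hx hnx
      have := hzero x.1 x.2 (hnx hx)
      simpa using this
  have h2 : ∑ x ∈ univ.filter (fun x : Fin p × Fin p => x.1 ≤ x.2 ∧ c x.1 = c x.2),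
        (if x.1 < x.2 then F x else 0)
      = ∑ x ∈ univ.filter (fun x : Fin p × Fin p => x.1 < x.2), F x := by
    rw [Finset.sum_filter, Finset.sum_filter]
    apply Finset.sum_congr rfl
    intro x _
    by_cases hlt : x.1 < x.2
    · by_cases hc : c x.1 = c x.2
      · simp [hlt, hc, le_of_lt hlt]
      · simp only [hlt, hc, if_true, if_false]
        have := hzero x.1 x.2 hc
        simp [le_of_lt hlt, hc, this]
    · simp [hlt]
  rw [h1, h2]
  have h3 : ∑ x ∈ univ.filter (fun x : Fin p × Fin p => x.1 < x.2), F x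
      = ∑ x ∈ univ.filter (fun x : Fin p × Fin p => ¬ x.1 ≤ x.2), F x := by
    refine Finset.sum_equiv (Equiv.prodComm (Fin p) (Fin p)) ?_ ?_
    · intro x; simp [not_le]
    · intro x _; exact hsymm x.1 x.2
  rw [h3, Finset.sum_filter_add_sum_filter_not]

open Matrix in
/-- Inverse of the constrained Fisher information matrix for a block-diagonal covariance.
Index pairs `(m,n)` with `m ≤ n` lying in a common block of the partition (fibers of `c`).
With `γ = Σ⁻¹`, define `A` (the Fisher information) and `B` entrywise as in the paper;
then `B = A⁻¹`. -/
theorem stmt_18 {p : ℕ} {K : Type*} [DecidableEq K]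
    (S : Matrix (Fin p) (Fin p) ℝ) (hS : S.PosDef)
    (c : Fin p → K) (hblock : ∀ i j, c i ≠ c j → S i j = 0)
    (G : Matrix (Fin p) (Fin p) ℝ) (hG : G = S⁻¹)
    (A B : Matrix {q : Fin p × Fin p // q.1 ≤ q.2 ∧ c q.1 = c q.2}
        {q : Fin p × Fin p // q.1 ≤ q.2 ∧ c q.1 = c q.2} ℝ)
    (hA : A = Matrix.of fun q q' =>
      if q.1.1 < q.1.2 then
        if q'.1.1 < q'.1.2 then
          (1/2) * (G q.1.1 q'.1.1 * G q.1.2 q'.1.2 + G q.1.1 q'.1.2 * G q.1.2 q'.1.1)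
        else (1 / Real.sqrt 2) * (G q.1.1 q'.1.1 * G q.1.2 q'.1.2)
      else
        if q'.1.1 < q'.1.2 then (1 / Real.sqrt 2) * (G q.1.1 q'.1.1 * G q.1.2 q'.1.2)
        else (1/2) * G q.1.1 q'.1.1 ^ 2)
    (hB : B = Matrix.of fun q q' =>
      if q.1.1 < q.1.2 then
        if q'.1.1 < q'.1.2 then
          2 * (S q.1.1 q'.1.1 * S q.1.2 q'.1.2 + S q.1.1 q'.1.2 * S q.1.2 q'.1.1)
        else 2 * Real.sqrt 2 * (S q.1.1 q'.1.1 * S q.1.2 q'.1.2)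
      else
        if q'.1.1 < q'.1.2 then 2 * Real.sqrt 2 * (S q.1.1 q'.1.1 * S q.1.2 q'.1.2)
        else 2 * S q.1.1 q'.1.1 ^ 2) :
    B = A⁻¹ := by
  classical
  have h2 : Real.sqrt 2 * Real.sqrt 2 = 2 := Real.mul_self_sqrt (by norm_num)
  have hs2ne : Real.sqrt 2 ≠ 0 := by positivity
  have hinv : (1:ℝ) / Real.sqrt 2 = Real.sqrt 2 / 2 := by
    rw [div_eq_div_iff hs2ne (by norm_num : (2:ℝ) ≠ 0)]
    rw [one_mul, h2]
  have hdet : IsUnit S.det := isUnit_iff_ne_zero.mpr (ne_of_gt hS.det_pos)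
  have hGS : G * S = 1 := by rw [hG]; exact Matrix.nonsing_inv_mul S hdet
  have hSG : S * G = 1 := by rw [hG]; exact Matrix.mul_nonsing_inv S hdet
  have hsum : ∀ a b : Fin p, (∑ i, G a i * S i b) = if a = b then (1:ℝ) else 0 := by
    intro a b
    have := congrFun (congrFun hGS a) b
    simpa [Matrix.mul_apply, Matrix.one_apply] using this
  -- G is block diagonal
  have hGb : ∀ i j, c i ≠ c j → G i j = 0 := by
    intro i j hij
    set D := Matrix.diagonal (fun t => if c t = c i then (1:ℝ) else 0) with hD
    have hSD : S * D = D * S := by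
      ext a b
      rw [Matrix.mul_diagonal, Matrix.diagonal_mul]
      by_cases hab : c a = c b
      · rw [hab, mul_comm]
      · simp [hblock a b hab]
    have hkey : G * (S * D) * G = G * (D * S) * G := by rw [hSD]
    have e1 : G * (S * D) * G = D * G := by
      rw [← Matrix.mul_assoc G S D, hGS, Matrix.one_mul]
    have e2 : G * (D * S) * G = G * D := by
      rw [Matrix.mul_assoc G (D * S) G, Matrix.mul_assoc D S G, hSG, Matrix.mul_one]
    have hDG : D * G = G * D := (e1.symm.trans hkey).trans e2
    have := congrFun (congrFun hDG i) j
    rw [hD] at this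
    simpa [Matrix.diagonal_mul, Matrix.mul_diagonal, Ne.symm hij] using this
  -- reformulations of A and B
  have hA' : ∀ qa qb : {q : Fin p × Fin p // q.1 ≤ q.2 ∧ c q.1 = c q.2},
      A qa qb = (if qa.1.1 < qa.1.2 then Real.sqrt 2 else 1)
        * (if qb.1.1 < qb.1.2 then Real.sqrt 2 else 1) / 4
        * (G qa.1.1 qb.1.1 * G qa.1.2 qb.1.2 + G qa.1.1 qb.1.2 * G qa.1.2 qb.1.1) := by
    rintro ⟨⟨m, n⟩, hmn, -⟩ ⟨⟨r, s⟩, hrs, -⟩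
    rw [hA]
    simp only [Matrix.of_apply]
    by_cases hm : m < n <;> by_cases hr : r < s
    · rw [if_pos hm, if_pos hr, if_pos hm, if_pos hr, h2]
      try ring
    · have hrs' : r = s := le_antisymm hrs (not_lt.mp hr)
      subst hrs'
      rw [if_pos hm, if_neg hr, if_pos hm, if_neg hr, hinv]
      try ring
    · have hmn' : m = n := le_antisymm hmn (not_lt.mp hm)
      subst hmn'
      rw [if_neg hm, if_pos hr, if_neg hm, if_pos hr, hinv]
      try ring
    · have hrs' : r = s := le_antisymm hrs (not_lt.mp hr)
      have hmn' : m = n := le_antisymm hmn (not_lt.mp hm)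
      subst hrs'; subst hmn'
      rw [if_neg hm, if_neg hr, if_neg hm, if_neg hr]
      try ring
  have hB' : ∀ qa qb : {q : Fin p × Fin p // q.1 ≤ q.2 ∧ c q.1 = c q.2},
      B qa qb = (if qa.1.1 < qa.1.2 then Real.sqrt 2 else 1)
        * (if qb.1.1 < qb.1.2 then Real.sqrt 2 else 1)
        * (S qa.1.1 qb.1.1 * S qa.1.2 qb.1.2 + S qa.1.1 qb.1.2 * S qa.1.2 qb.1.1) := by
    rintro ⟨⟨m, n⟩, hmn, -⟩ ⟨⟨r, s⟩, hrs, -⟩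
    rw [hB]
    simp only [Matrix.of_apply]
    by_cases hm : m < n <;> by_cases hr : r < s
    · rw [if_pos hm, if_pos hr, if_pos hm, if_pos hr, h2]
      try ring
    · have hrs' : r = s := le_antisymm hrs (not_lt.mp hr)
      subst hrs'
      rw [if_pos hm, if_neg hr, if_pos hm, if_neg hr]
      try ring
    · have hmn' : m = n := le_antisymm hmn (not_lt.mp hm)
      subst hmn'
      rw [if_neg hm, if_pos hr, if_neg hm, if_pos hr]
      try ring
    · have hrs' : r = s := le_antisymm hrs (not_lt.mp hr)
      have hmn' : m = n := le_antisymm hmn (not_lt.mp hm)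
      subst hrs'; subst hmn'
      rw [if_neg hm, if_neg hr, if_neg hm, if_neg hr]
      try ring
  -- main claim : A * B = 1
  have hAB : A * B = 1 := by
    ext q q''
    obtain ⟨⟨m, n⟩, hmn, hcmn⟩ := q
    obtain ⟨⟨r, s⟩, hrs, hcrs⟩ := q''
    rw [Matrix.mul_apply]
    set F : Fin p × Fin p → ℝ := fun x =>
      (G m x.1 * G n x.2 + G m x.2 * G n x.1) * (S x.1 r * S x.2 s + S x.1 s * S x.2 r)
      with hF
    have hFsymm : ∀ i j, F (i, j) = F (j, i) := by
      intro i j; simp only [hF]; ring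
    have hFzero : ∀ i j, c i ≠ c j → F (i, j) = 0 := by
      intro i j hij
      simp only [hF]
      by_cases hci : c m = c i
      · have hcj : c n ≠ c j := by rw [← hcmn]; rw [← hci] at hij; exact hij
        rw [hGb n j hcj]
        have hcj' : c m ≠ c j := by rw [hcmn]; exact hcj
        rw [hGb m j hcj']
        ring
      · rw [hGb m i hci]
        have : c n ≠ c i := by rw [← hcmn]; exact hci
        rw [hGb n i this]
        ring
    have step1 : ∀ qb : {q : Fin p × Fin p // q.1 ≤ q.2 ∧ c q.1 = c q.2},
        A ⟨(m, n), hmn, hcmn⟩ qb * B qb ⟨(r, s), hrs, hcrs⟩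
        = ((if m < n then Real.sqrt 2 else 1) * (if r < s then Real.sqrt 2 else 1) / 4)
          * ((if qb.1.1 < qb.1.2 then (2:ℝ) else 1) * F qb.1) := by
      intro qb
      rw [hA', hB']
      have hw2 : (if qb.1.1 < qb.1.2 then Real.sqrt 2 else 1)
          * (if qb.1.1 < qb.1.2 then Real.sqrt 2 else 1)
          = (if qb.1.1 < qb.1.2 then (2:ℝ) else 1) := by
        split
        · exact h2
        · exact mul_one 1
      simp only [hF]
      rw [← hw2]
      ring
    rw [Finset.sum_congr rfl (fun qb _ => step1 qb), ← Finset.mul_sum]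
    rw [sum_pairs_aux c F hFsymm hFzero]
    -- expand the full double sum
    have hexp : ∑ x : Fin p × Fin p, F x
        = 2 * ((if m = r then (1:ℝ) else 0) * (if n = s then (1:ℝ) else 0)
          + (if m = s then (1:ℝ) else 0) * (if n = r then (1:ℝ) else 0)) := by
      rw [Fintype.sum_prod_type]
      have e1 : ∀ i : Fin p, (∑ j, F (i, j))
          = (G m i * S i r) * (if n = s then (1:ℝ) else 0)
            + (G m i * S i s) * (if n = r then (1:ℝ) else 0)
            + (G n i * S i r) * (if m = s then (1:ℝ) else 0)
            + (G n i * S i s) * (if m = r then (1:ℝ) else 0) := by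
        intro i
        have e0 : ∀ j, F (i, j)
            = (G m i * S i r) * (G n j * S j s) + (G m i * S i s) * (G n j * S j r)
              + (G n i * S i r) * (G m j * S j s) + (G n i * S i s) * (G m j * S j r) := by
          intro j; simp only [hF]; ring
        rw [Finset.sum_congr rfl (fun j _ => e0 j)]
        rw [Finset.sum_add_distrib, Finset.sum_add_distrib, Finset.sum_add_distrib,
          ← Finset.mul_sum, ← Finset.mul_sum, ← Finset.mul_sum, ← Finset.mul_sum,
          hsum n s, hsum n r, hsum m s, hsum m r]
      rw [Finset.sum_congr rfl (fun i _ => e1 i)]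
      rw [Finset.sum_add_distrib, Finset.sum_add_distrib, Finset.sum_add_distrib,
        ← Finset.sum_mul, ← Finset.sum_mul, ← Finset.sum_mul, ← Finset.sum_mul,
        hsum m r, hsum m s, hsum n r, hsum n s]
      ring
    rw [hexp, Matrix.one_apply]
    simp only [Subtype.mk.injEq, Prod.mk.injEq]
    by_cases hq : m = r ∧ n = s
    · obtain ⟨hq1, hq2⟩ := hq
      subst hq1; subst hq2
      have hrhs : (if (m = m ∧ n = n) then (1:ℝ) else 0) = 1 := if_pos ⟨rfl, rfl⟩
      rw [hrhs]
      by_cases hlt : m < n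
      · have hne : m ≠ n := ne_of_lt hlt
        rw [if_pos hlt, if_neg hne, if_neg (Ne.symm hne),
          if_pos (rfl : m = m), if_pos (rfl : n = n), h2]
        norm_num
      · have heq : m = n := le_antisymm hmn (not_lt.mp hlt)
        subst heq
        rw [if_neg hlt, if_pos (rfl : m = m)]
        norm_num
    · rw [if_neg hq]
      have hz1 : (if m = r then (1:ℝ) else 0) * (if n = s then (1:ℝ) else 0) = 0 := by
        by_cases h1 : m = r
        · have h2' : n ≠ s := fun h => hq ⟨h1, h⟩
          rw [if_neg h2', mul_zero]
        · rw [if_neg h1, zero_mul]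
      have hz2 : (if m = s then (1:ℝ) else 0) * (if n = r then (1:ℝ) else 0) = 0 := by
        by_cases h1 : m = s
        · by_cases h3 : n = r
          · exfalso
            have hmr : m = r := le_antisymm (h3 ▸ hmn) (h1 ▸ hrs)
            have hns : n = s := h3.trans (hmr.symm.trans h1)
            exact hq ⟨hmr, hns⟩
          · rw [if_neg h3, mul_zero]
        · rw [if_neg h1, zero_mul]
      rw [hz1, hz2]
      ring
  exact (Matrix.inv_eq_right_inv hAB).symm
end
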